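/- Let (i_1, …, i_n) be an admissible sequence of positive integers (i_s ≥ 2·i_{s+1} for all s < n). If the excess i_1 − (i_2 + ⋯ + i_n) equals 2, then there exist natural numbers k_1, k_2 ≥ 0 such that n = k_1 + k_2 + 1 and i_j = (1 + 2^{k_1})·2^{k_2 + 1 - j} for 1 ≤ j ≤ k_2 + 1, and i_{k_2+1+j} = 2^{k_1 - j} for 1 ≤ j ≤ k_1. Conversely every sequence of this form is admissible of excess 2. -/
import Mathlib

private def Eseq (g : ℕ → ℤ) (n m : ℕ) : ℤ := g m - ∑ j ∈ Finset.Ico (m+1) n, g j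

private lemma Eseq_last (g : ℕ → ℤ) (n : ℕ) (hn : 0 < n) :
    Eseq g n (n-1) = g (n-1) := by
  unfold Eseq
  rw [show n - 1 + 1 = n by omega, Finset.Ico_self, Finset.sum_empty, sub_zero]

private lemma Eseq_rec (g : ℕ → ℤ) (n m : ℕ) (h : m + 1 < n) :
    Eseq g n m = (g m - 2 * g (m+1)) + Eseq g n (m+1) := by
  unfold Eseq
  rw [Finset.sum_eq_sum_Ico_succ_bot h]
  ring

theorem stmt16 (n : ℕ) (hn : 0 < n) (i : Fin n → ℕ)
    (hpos : ∀ j, 0 < i j)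
    (hadm : ∀ j : Fin n, ∀ h : j.val + 1 < n, 2 * i ⟨j.val + 1, h⟩ ≤ i j) :
    ((i ⟨0, hn⟩ : ℤ)
        - ∑ j ∈ Finset.univ.filter (fun j : Fin n => j ≠ ⟨0, hn⟩), (i j : ℤ)) = 2
      ↔ ∃ (k1 k2 : ℕ) (h : n = k1 + k2 + 1),
          (∀ j : ℕ, (hj : j ≤ k2) →
            i ⟨j, by omega⟩ = (1 + 2 ^ k1) * 2 ^ (k2 - j))
          ∧ (∀ j : ℕ, (hj : j < k1) →
            i ⟨k2 + 1 + j, by omega⟩ = 2 ^ (k1 - 1 - j)) := by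
  classical
  set g : ℕ → ℤ := fun m => if h : m < n then (i ⟨m, h⟩ : ℤ) else 0 with hg
  have hgval : ∀ m (h : m < n), g m = (i ⟨m, h⟩ : ℤ) := by
    intro m h; simp only [hg]; rw [dif_pos h]
  have hg1 : ∀ m, m < n → 1 ≤ g m := by
    intro m h; rw [hgval m h]; exact_mod_cast hpos _
  have hg2 : ∀ m, m + 1 < n → 2 * g (m+1) ≤ g m := by
    intro m h
    rw [hgval m (by omega), hgval (m+1) h]
    exact_mod_cast hadm ⟨m, by omega⟩ h
  have hsum : (i ⟨0, hn⟩ : ℤ)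
        - ∑ j ∈ Finset.univ.filter (fun j : Fin n => j ≠ ⟨0, hn⟩), (i j : ℤ)
      = Eseq g n 0 := by
    have h1 : ∑ j ∈ Finset.univ.filter (fun j : Fin n => j ≠ ⟨0, hn⟩), (i j : ℤ)
        = (∑ j : Fin n, (i j : ℤ)) - (i ⟨0,hn⟩ : ℤ) := by
      rw [Finset.filter_ne', Finset.sum_erase_eq_sub (Finset.mem_univ _)]
    have h2 : (∑ j : Fin n, (i j : ℤ)) = ∑ m ∈ Finset.range n, g m := by
      rw [← Fin.sum_univ_eq_sum_range (fun m => g m)]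
      apply Finset.sum_congr rfl
      intro j _
      rw [hgval j.val j.isLt]
    have h3 : ∑ m ∈ Finset.range n, g m = g 0 + ∑ m ∈ Finset.Ico 1 n, g m := by
      rw [Finset.range_eq_Ico, Finset.sum_eq_sum_Ico_succ_bot hn]
    unfold Eseq
    rw [h1, h2, h3, hgval 0 hn, zero_add]
    ring
  rw [hsum]
  have Elast : Eseq g n (n-1) = g (n-1) := Eseq_last g n hn
  have Erec : ∀ m, m + 1 < n → Eseq g n m = (g m - 2 * g (m+1)) + Eseq g n (m+1) :=
    Eseq_rec g n
  have Ege : ∀ d m, m + d + 1 = n → 1 ≤ Eseq g n m := by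
    intro d
    induction d with
    | zero =>
      intro m hm
      have hm' : m = n - 1 := by omega
      subst hm'
      rw [Elast]; exact hg1 _ (by omega)
    | succ d ih =>
      intro m hm
      rw [Erec m (by omega)]
      have h1 := ih (m+1) (by omega)
      have h2 := hg2 m (by omega)
      linarith
  have Ege' : ∀ m, m < n → 1 ≤ Eseq g n m := fun m h => Ege (n - m - 1) m (by omega)
  have Emono : ∀ m, m + 1 < n → Eseq g n (m+1) ≤ Eseq g n m := by
    intro m h
    rw [Erec m h]
    have := hg2 m h
    linarith
  constructor
  · intro hE0
    have Ele : ∀ m, m < n → Eseq g n m ≤ 2 := by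
      intro m
      induction m with
      | zero => intro _; rw [hE0]
      | succ m ih =>
        intro h
        calc Eseq g n (m+1) ≤ Eseq g n m := Emono m h
          _ ≤ 2 := ih (by omega)
    have hex : ∃ m, n ≤ m ∨ Eseq g n m = 1 := ⟨n, Or.inl le_rfl⟩
    set c := Nat.find hex with hc
    have hc_spec : n ≤ c ∨ Eseq g n c = 1 := Nat.find_spec hex
    have hc_min : ∀ m, m < c → ¬(n ≤ m ∨ Eseq g n m = 1) := fun m hm => Nat.find_min hex hm
    have hc_le : c ≤ n := Nat.find_le (Or.inl le_rfl)
    have hc_pos : 0 < c := by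
      rcases Nat.eq_zero_or_pos c with h0 | h0
      · rw [h0] at hc_spec
        rcases hc_spec with h | h
        · omega
        · rw [hE0] at h; norm_num at h
      · exact h0
    have hE2 : ∀ m, m < c → Eseq g n m = 2 := by
      intro m hm
      have h1 := hc_min m hm
      push_neg at h1
      obtain ⟨hmn, hme⟩ := h1
      have ha := Ege' m (by omega)
      have hb := Ele m (by omega)
      omega
    have hE1 : ∀ m, c ≤ m → m < n → Eseq g n m = 1 := by
      intro m hcm hmn
      have hcn : c < n := by omega
      have hEc : Eseq g n c = 1 := hc_spec.resolve_left (by omega)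
      have chain : ∀ d, c + d < n → Eseq g n (c + d) ≤ Eseq g n c := by
        intro d
        induction d with
        | zero => intro _; simp
        | succ d ih =>
          intro h
          have h' : c + d + 1 < n := by omega
          calc Eseq g n (c + (d+1)) = Eseq g n (c + d + 1) := by ring_nf
            _ ≤ Eseq g n (c + d) := Emono _ h'
            _ ≤ Eseq g n c := ih (by omega)
      have h1 := chain (m - c) (by omega)
      rw [show c + (m - c) = m by omega] at h1
      have h2 := Ege' m hmn
      omega
    have tail : ∀ d m, m + d + 1 = n → c ≤ m → g m = 2 ^ (n - 1 - m) := by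
      intro d
      induction d with
      | zero =>
        intro m hm hcm
        have hm' : m = n - 1 := by omega
        subst hm'
        have h1 : Eseq g n (n-1) = 1 := hE1 _ hcm (by omega)
        rw [Elast] at h1
        rw [h1, show n - 1 - (n-1) = 0 by omega, pow_zero]
      | succ d ih =>
        intro m hm hcm
        have h1 : m + 1 < n := by omega
        have he : Eseq g n m = 1 := hE1 m hcm (by omega)
        have he' : Eseq g n (m+1) = 1 := hE1 (m+1) (by omega) h1
        have hrec := Erec m h1
        have hg' : g m = 2 * g (m+1) := by omega
        rw [hg', ih (m+1) (by omega) (by omega),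
          show n - 1 - m = (n - 1 - (m+1)) + 1 by omega, pow_succ]
        ring
    have head : ∀ d m, m + d + 1 = c → g m = (1 + 2 ^ (n - c)) * 2 ^ (c - 1 - m) := by
      intro d
      induction d with
      | zero =>
        intro m hm
        have hm' : m = c - 1 := by omega
        subst hm'
        rw [show c - 1 - (c-1) = 0 by omega, pow_zero, mul_one]
        by_cases hcn : c = n
        · have h1 : Eseq g n (c-1) = 2 := hE2 _ (by omega)
          rw [show c - 1 = n - 1 by omega, Elast] at h1
          rw [show c - 1 = n - 1 by omega, h1, show n - c = 0 by omega, pow_zero]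
          norm_num
        · have hcn' : c < n := lt_of_le_of_ne hc_le hcn
          have hrec := Erec (c-1) (by omega)
          rw [show c - 1 + 1 = c by omega] at hrec
          have hEm : Eseq g n (c-1) = 2 := hE2 _ (by omega)
          have hEc : Eseq g n c = 1 := hE1 c le_rfl hcn'
          have hgc : g c = 2 ^ (n - 1 - c) := tail (n - c - 1) c (by omega) le_rfl
          have hp : (2:ℤ) ^ (n - c) = 2 * 2 ^ (n - 1 - c) := by
            rw [show n - c = (n - 1 - c) + 1 by omega, pow_succ]; ring
          have hval : g (c-1) = 2 * g c + 1 := by omega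
          rw [hval, hgc]
          linarith
      | succ d ih =>
        intro m hm
        have h1 : m + 1 < n := by omega
        have he : Eseq g n m = 2 := hE2 m (by omega)
        have he' : Eseq g n (m+1) = 2 := hE2 (m+1) (by omega)
        have hrec := Erec m h1
        have hg' : g m = 2 * g (m+1) := by omega
        rw [hg', ih (m+1) (by omega),
          show c - 1 - m = (c - 1 - (m+1)) + 1 by omega, pow_succ]
        ring
    refine ⟨n - c, c - 1, by omega, ?_, ?_⟩
    · intro j hj
      have h1 := head (c - 1 - j) j (by omega)
      have hjn : j < n := by omega
      rw [hgval j hjn] at h1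
      have h2 : (i ⟨j, hjn⟩ : ℤ) = ((1 + 2 ^ (n - c)) * 2 ^ (c - 1 - j) : ℕ) := by
        push_cast; exact h1
      exact_mod_cast h2
    · intro j hj
      have hjn : c - 1 + 1 + j < n := by omega
      have h1 := tail (n - (c - 1 + 1 + j) - 1) (c - 1 + 1 + j) (by omega) (by omega)
      rw [hgval _ hjn] at h1
      rw [show n - 1 - (c - 1 + 1 + j) = n - c - 1 - j by omega] at h1
      have h2 : (i ⟨c - 1 + 1 + j, hjn⟩ : ℤ) = ((2 ^ (n - c - 1 - j) : ℕ) : ℤ) := by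
        push_cast; exact h1
      exact_mod_cast h2
  · rintro ⟨k1, k2, h, hhead, htail⟩
    have hgj : ∀ m, m ≤ k2 → g m = (1 + 2 ^ k1) * 2 ^ (k2 - m) := by
      intro m hm
      rw [hgval m (by omega)]
      exact_mod_cast congrArg (Nat.cast : ℕ → ℤ) (hhead m hm)
    have hgt : ∀ j, j < k1 → g (k2 + 1 + j) = 2 ^ (k1 - 1 - j) := by
      intro j hj
      rw [hgval (k2 + 1 + j) (by omega)]
      exact_mod_cast congrArg (Nat.cast : ℕ → ℤ) (htail j hj)
    have Etail : ∀ d m, m + d + 1 = n → k2 + 1 ≤ m → Eseq g n m = 1 := by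
      intro d
      induction d with
      | zero =>
        intro m hm hkm
        have hm' : m = n - 1 := by omega
        have hk1 : 1 ≤ k1 := by omega
        have h1 := hgt (m - k2 - 1) (by omega)
        rw [show k2 + 1 + (m - k2 - 1) = m by omega] at h1
        rw [show k1 - 1 - (m - k2 - 1) = 0 by omega, pow_zero] at h1
        rw [hm', Elast, ← hm', h1]
      | succ d ih =>
        intro m hm hkm
        have h1 : m + 1 < n := by omega
        have he' := ih (m+1) (by omega) (by omega)
        have hgm := hgt (m - k2 - 1) (by omega)
        rw [show k2 + 1 + (m - k2 - 1) = m by omega] at hgm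
        have hgm1 := hgt (m - k2) (by omega)
        rw [show k2 + 1 + (m - k2) = m + 1 by omega] at hgm1
        have hp : (2:ℤ) ^ (k1 - 1 - (m - k2 - 1)) = 2 * 2 ^ (k1 - 1 - (m - k2)) := by
          rw [show k1 - 1 - (m - k2 - 1) = (k1 - 1 - (m - k2)) + 1 by omega, pow_succ]
          ring
        rw [Erec m h1, he', hgm, hgm1, hp]
        ring
    have hEk2 : Eseq g n k2 = 2 := by
      by_cases hk1 : k1 = 0
      · have h1 : k2 = n - 1 := by omega
        have h2 := hgj k2 le_rfl
        rw [show k2 - k2 = 0 by omega, pow_zero, hk1, pow_zero] at h2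
        rw [h1, Elast, ← h1, h2]
        norm_num
      · have h1 : k2 + 1 < n := by omega
        have hE1 := Etail (n - k2 - 2) (k2+1) (by omega) le_rfl
        have hgk2 := hgj k2 le_rfl
        rw [show k2 - k2 = 0 by omega, pow_zero, mul_one] at hgk2
        have hgk21 := hgt 0 (by omega)
        rw [show k2 + 1 + 0 = k2 + 1 by omega, show k1 - 1 - 0 = k1 - 1 by omega] at hgk21
        have hp : (2:ℤ) ^ k1 = 2 * 2 ^ (k1 - 1) := by
          have := pow_succ (2:ℤ) (k1 - 1)
          rw [show k1 - 1 + 1 = k1 by omega] at this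
          linarith
        rw [Erec k2 h1, hE1, hgk2, hgk21]
        linarith
    have Ehead : ∀ d m, m + d = k2 → Eseq g n m = 2 := by
      intro d
      induction d with
      | zero =>
        intro m hm
        have hm' : m = k2 := by omega
        rw [hm']; exact hEk2
      | succ d ih =>
        intro m hm
        have h1 : m + 1 < n := by omega
        have he' := ih (m+1) (by omega)
        have hgm := hgj m (by omega)
        have hgm1 := hgj (m+1) (by omega)
        have hp : (2:ℤ) ^ (k2 - m) = 2 * 2 ^ (k2 - (m+1)) := by
          rw [show k2 - m = (k2 - (m+1)) + 1 by omega, pow_succ]; ring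
        rw [Erec m h1, he', hgm, hgm1, hp]
        ring
    have := Ehead k2 0 (by omega)
    exact this
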